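/- Let J be the exceptional Jordan algebra over a composition algebra O (char k ≠ 2,3) with cubic determinant det as above. For u ∈ O, define n₂₁(u) : J → J by X ↦ L X L̄ᵗ where L is the unipotent lower-triangular matrix with u in position (2,1). Then n₂₁(u)(X) is well defined independent of the order of multiplication, lies in J, and det(n₂₁(u)(X)) = det(X). -/
import Mathlib


/-- A composition algebra over a field `k`: a unital (not necessarily associative)
`k`-algebra equipped with a nondegenerate multiplicative quadratic form `N`. -/
structure CompAlg (k : Type*) [Field k] (O : Type*) [NonAssocRing O] [Module k O] : Type _ where
  smul_mul : ∀ (c : k) (x y : O), (c • x) * y = c • (x * y)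
  mul_smul' : ∀ (c : k) (x y : O), x * (c • y) = c • (x * y)
  N : QuadraticForm k O
  norm_mul : ∀ x y : O, N (x * y) = N x * N y
  nondeg : ∀ x : O, (∀ y : O, QuadraticMap.polar (⇑N) x y = 0) → x = 0

namespace CompAlg

variable {k O : Type*} [Field k] [NonAssocRing O] [Module k O]

/-- The trace of an element: `tr x = b(x, 1)` where `b` is the polar form of `N`. -/
def tr (C : CompAlg k O) (x : O) : k := QuadraticMap.polar (⇑C.N) x 1

/-- Conjugation: `x̄ = tr(x)·1 - x`. -/
def conj (C : CompAlg k O) (x : O) : O := C.tr x • (1 : O) - x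

end CompAlg

namespace CompAlg

variable {k O : Type*} [Field k] [NonAssocRing O] [Module k O]

/-- The cubic determinant of a 3×3 Hermitian matrix over O with diagonal
(s₁,s₂,s₃) and off-diagonal octonion entries x₁, x₂, x₃. -/
def jdet (C : CompAlg k O) (s₁ s₂ s₃ : k) (x₁ x₂ x₃ : O) : k :=
  s₁ * s₂ * s₃ + C.tr ((x₁ * x₂) * x₃) - s₁ * C.N x₁ - s₂ * C.N x₂ - s₃ * C.N x₃

/-- The Hermitian 3×3 matrix over O determined by its diagonal scalars and
off-diagonal octonion entries. -/
def toMat (C : CompAlg k O) (s₁ s₂ s₃ : k) (x₁ x₂ x₃ : O) : Matrix (Fin 3) (Fin 3) O :=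
  !![s₁ • (1 : O), x₃, C.conj x₂; C.conj x₃, s₂ • (1 : O), x₁; x₂, C.conj x₁, s₃ • (1 : O)]

end CompAlg


namespace CompAlg

variable {k O : Type*} [Field k] [NonAssocRing O] [Module k O]
variable (C : CompAlg k O)

/-- bilinear form -/
def B (x y : O) : k := QuadraticMap.polar (⇑C.N) x y

lemma B_comm (x y : O) : C.B x y = C.B y x := QuadraticMap.polar_comm _ x y
lemma B_add_left (x x' y : O) : C.B (x + x') y = C.B x y + C.B x' y :=
  QuadraticMap.polar_add_left _ x x' y
lemma B_add_right (x y y' : O) : C.B x (y + y') = C.B x y + C.B x y' :=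
  QuadraticMap.polar_add_right _ x y y'
lemma B_smul_left (a : k) (x y : O) : C.B (a • x) y = a * C.B x y := by
  unfold B; rw [QuadraticMap.polar_smul_left, smul_eq_mul]
lemma B_smul_right (a : k) (x y : O) : C.B x (a • y) = a * C.B x y := by
  unfold B; rw [QuadraticMap.polar_smul_right, smul_eq_mul]
lemma B_sub_left (x x' y : O) : C.B (x - x') y = C.B x y - C.B x' y :=
  QuadraticMap.polar_sub_left _ x x' y
lemma B_sub_right (x y y' : O) : C.B x (y - y') = C.B x y - C.B x y' :=
  QuadraticMap.polar_sub_right _ x y y'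

lemma N_add (x y : O) : C.N (x + y) = C.N x + C.N y + C.B x y := by
  unfold B QuadraticMap.polar; ring

lemma N_smul (a : k) (x : O) : C.N (a • x) = a * a * C.N x := by
  simpa [smul_eq_mul] using QuadraticMap.map_smul (Q := C.N) a x

lemma B_ext {x y : O} (h : ∀ z, C.B x z = C.B y z) : x = y := by
  have h' : ∀ z, C.B (x - y) z = 0 := fun z => by rw [C.B_sub_left, h, sub_self]
  exact sub_eq_zero.mp (C.nondeg (x - y) h')

lemma tr_eq (x : O) : C.tr x = C.B x 1 := rfl
lemma B_one_left (z : O) : C.B 1 z = C.tr z := by rw [C.B_comm]; rfl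

/-- linearization in the left variable -/
lemma B_mul_mul_left (x z y : O) : C.B (x * y) (z * y) = C.B x z * C.N y := by
  have h := C.norm_mul (x + z) y
  rw [add_mul, C.N_add, C.N_add, C.norm_mul, C.norm_mul] at h
  linear_combination h

/-- linearization in the right variable -/
lemma B_mul_mul_right (x y w : O) : C.B (x * y) (x * w) = C.N x * C.B y w := by
  have h := C.norm_mul x (y + w)
  rw [mul_add, C.N_add, C.N_add, C.norm_mul, C.norm_mul] at h
  linear_combination h

/-- full linearization -/
lemma B_mul_mul (x y z w : O) :
    C.B (x * y) (z * w) + C.B (z * y) (x * w) = C.B x z * C.B y w := by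
  have h := C.B_mul_mul_left x z (y + w)
  rw [mul_add, mul_add, C.B_add_left, C.B_add_right, C.B_add_right, C.N_add] at h
  rw [C.B_mul_mul_left x z y, C.B_mul_mul_left x z w] at h
  have h2 := C.B_comm (x * w) (z * y)
  linear_combination h - h2


lemma B_one_one : C.B 1 1 = 2 * C.N 1 := by
  have h : (1 : O) + 1 = (2 : k) • (1 : O) := (two_smul k (1:O)).symm
  unfold B QuadraticMap.polar
  rw [h, C.N_smul]; ring

lemma tr_one : C.tr 1 = 2 * C.N 1 := C.B_one_one

lemma tr_add (x y : O) : C.tr (x + y) = C.tr x + C.tr y := C.B_add_left x y 1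
lemma tr_smul (a : k) (x : O) : C.tr (a • x) = a * C.tr x := C.B_smul_left a x 1

lemma N_one_eq (h2 : (2 : k) ≠ 0) (hx : ∃ x : O, x ≠ 0) : C.N 1 = 1 := by
  obtain ⟨x, hx⟩ := hx
  by_contra hN
  apply hx
  apply C.nondeg
  intro z
  have h := C.B_mul_mul x 1 z 1
  rw [mul_one, mul_one, C.B_one_one] at h
  have h2' : C.B x z + C.B z x = C.B x z * (2 * C.N 1) := h
  rw [C.B_comm z x] at h2'
  have : C.B x z * (2 * (C.N 1 - 1)) = 0 := by ring_nf; linear_combination -h2'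
  rcases mul_eq_zero.mp this with h | h
  · exact h
  · exact absurd (by
      rcases mul_eq_zero.mp h with h' | h'
      · exact absurd h' h2
      · exact sub_eq_zero.mp h') hN

lemma adjoint_left (x y w : O) : C.B (x * y) w = C.B y (C.conj x * w) := by
  have h := C.B_mul_mul x y 1 w
  rw [one_mul, one_mul] at h
  have hc : C.conj x * w = C.tr x • w - x * w := by
    unfold conj; rw [sub_mul, C.smul_mul, one_mul]
  rw [hc, C.B_sub_right, C.B_smul_right]
  rw [← C.tr_eq] at h
  linear_combination h

lemma adjoint_right (x y z : O) : C.B (x * y) z = C.B x (z * C.conj y) := by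
  have h := C.B_mul_mul x y z 1
  rw [mul_one, mul_one] at h
  have hc : z * C.conj y = C.tr y • z - z * y := by
    unfold conj; rw [mul_sub, C.mul_smul', mul_one]
  rw [hc, C.B_sub_right, C.B_smul_right]
  rw [← C.tr_eq, C.B_comm (z * y) x] at h
  linear_combination h

lemma B_conj_right (x y : O) : C.B x (C.conj y) = C.tr (x * y) := by
  have h := C.adjoint_right x y 1
  rw [one_mul] at h
  rw [← h]; rfl

lemma tr_mul (x y : O) : C.tr (x * y) = C.tr x * C.tr y - C.B x y := by
  rw [← C.B_conj_right]
  unfold conj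
  rw [C.B_sub_right, C.B_smul_right, ← C.tr_eq]
  ring

lemma tr_mul_comm (x y : O) : C.tr (x * y) = C.tr (y * x) := by
  rw [C.tr_mul, C.tr_mul, C.B_comm]; ring

lemma conj_add (x y : O) : C.conj (x + y) = C.conj x + C.conj y := by
  unfold conj; rw [C.tr_add, add_smul]; abel

lemma conj_smul (a : k) (x : O) : C.conj (a • x) = a • C.conj x := by
  unfold conj; rw [C.tr_smul, mul_smul, smul_sub]

lemma sq_eq (x : O) : x * x = C.tr x • x - C.N x • (1 : O) := by
  apply C.B_ext
  intro z
  have h := C.B_mul_mul x x 1 z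
  rw [one_mul, one_mul] at h
  have h2 : C.B x (x * z) = C.N x * C.B 1 z := by
    have := C.B_mul_mul_right x 1 z
    rwa [mul_one] at this
  rw [C.B_sub_left, C.B_smul_left, C.B_smul_left]
  rw [← C.tr_eq] at h
  linear_combination h - h2

lemma mul_conj (x : O) : x * C.conj x = C.N x • (1 : O) := by
  unfold conj
  rw [mul_sub, C.mul_smul', mul_one, C.sq_eq]; abel

section NormOne
variable (h1 : C.N 1 = 1)
include h1

lemma tr_conj (x : O) : C.tr (C.conj x) = C.tr x := by
  unfold conj
  rw [C.tr_eq, C.B_sub_left, C.B_smul_left, C.B_one_one, h1, ← C.tr_eq]; ring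

lemma conj_conj (x : O) : C.conj (C.conj x) = x := by
  conv_lhs => rw [conj, C.tr_conj h1, conj]
  abel

lemma N_conj (x : O) : C.N (C.conj x) = C.N x := by
  unfold conj
  rw [sub_eq_add_neg, C.N_add, C.N_smul, h1]
  have hn : C.N (-x) = C.N x := QuadraticMap.map_neg _ _
  have hb : C.B (C.tr x • (1:O)) (-x) = -(C.tr x * C.tr x) := by
    unfold B
    rw [QuadraticMap.polar_smul_left, QuadraticMap.polar_neg_right,
      QuadraticMap.polar_comm (⇑C.N) 1 x, smul_eq_mul]
    show C.tr x * -(C.tr x) = -(C.tr x * C.tr x)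
    ring
  rw [hn, hb]
  ring

lemma conj_mul (x y : O) : C.conj (x * y) = C.conj y * C.conj x := by
  apply C.B_ext
  intro z
  -- LHS
  have hL : C.B (C.conj (x * y)) z = C.tr (x * y) * C.tr z - C.B (x * y) z := by
    unfold conj
    rw [C.B_sub_left, C.B_smul_left, C.B_comm 1 z, ← C.tr_eq]
  have hR : C.B (C.conj y * C.conj x) z = C.B (C.conj x) (y * z) := by
    have := C.adjoint_left (C.conj y) (C.conj x) z
    rwa [C.conj_conj h1] at this
  have hcx : C.B (C.conj x) (y * z) = C.tr x * C.tr (y * z) - C.B x (y * z) := by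
    unfold conj
    rw [C.B_sub_left, C.B_smul_left, C.B_comm 1 (y*z)]
    rfl
  have hxyz : C.B x (y * z) = C.B x y * C.tr z - C.B y (x * z) := by
    have h := C.B_mul_mul x 1 y z
    rw [mul_one, mul_one, C.B_one_left] at h
    linear_combination h
  have hxy : C.B (x * y) z = C.tr x * C.B y z - C.B y (x * z) := by
    rw [C.adjoint_left]
    have hc : C.conj x * z = C.tr x • z - x * z := by
      unfold conj; rw [sub_mul, C.smul_mul, one_mul]
    rw [hc, C.B_sub_right, C.B_smul_right]
  have htr : C.tr (x * y) = C.tr x * C.tr y - C.B x y := C.tr_mul x y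
  have htryz : C.tr (y * z) = C.tr y * C.tr z - C.B y z := C.tr_mul y z
  rw [hL, hR, hcx, hxyz, hxy, htr, htryz]
  ring

lemma mul_conj_mul (x y : O) : (x * C.conj y) * y = C.N y • x := by
  apply C.B_ext
  intro z
  rw [C.adjoint_right, C.B_mul_mul_left, C.N_conj h1, C.B_smul_left]
  ring

lemma tr_mul_conj_self (u : O) : C.tr (u * C.conj u) = 2 * C.N u := by
  rw [C.mul_conj, C.tr_smul, C.tr_one, h1]; ring

omit h1 in
lemma conj_add_self (y : O) : C.conj y + y = C.tr y • (1 : O) := by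
  unfold conj; abel



end NormOne

lemma jdet_invariant (h1 : C.N 1 = 1) (u x₁ x₂ x₃ : O) (s₁ s₂ s₃ : k) :
    C.jdet s₁ (s₂ + s₁ * C.N u + C.tr (u * x₃)) s₃ (u * C.conj x₂ + x₁) x₂ (s₁ • C.conj u + x₃)
      = C.jdet s₁ s₂ s₃ x₁ x₂ x₃ := by
  have hmul : (u * C.conj x₂ + x₁) * x₂ = C.N x₂ • u + x₁ * x₂ := by
    rw [add_mul, C.mul_conj_mul h1]
  have hcross : C.tr ((x₁ * x₂) * C.conj u) = C.B (x₁ * x₂) u := by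
    rw [← C.B_conj_right, C.conj_conj h1]
  have hN1 : C.N (u * C.conj x₂ + x₁)
      = C.N u * C.N x₂ + C.N x₁ + C.B (x₁ * x₂) u := by
    rw [C.N_add, C.norm_mul, C.N_conj h1]
    congr 1
    rw [C.B_comm, ← C.adjoint_right]
  have hBconj : C.B (C.conj u) x₃ = C.tr (u * x₃) := by
    rw [C.B_comm, C.B_conj_right, C.tr_mul_comm]
  have hN3 : C.N (s₁ • C.conj u + x₃)
      = s₁ * s₁ * C.N u + C.N x₃ + s₁ * C.tr (u * x₃) := by
    rw [C.N_add, C.N_smul, C.N_conj h1, C.B_smul_left, hBconj]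
  have htr : C.tr (((u * C.conj x₂ + x₁) * x₂) * (s₁ • C.conj u + x₃))
      = C.N x₂ * s₁ * (2 * C.N u) + s₁ * C.B (x₁ * x₂) u
        + C.N x₂ * C.tr (u * x₃) + C.tr ((x₁ * x₂) * x₃) := by
    rw [hmul]
    simp only [add_mul, mul_add, C.smul_mul, C.mul_smul', C.tr_add, C.tr_smul]
    rw [C.tr_mul_conj_self h1, hcross]
    ring
  unfold jdet
  rw [hN1, hN3, htr]
  ring


end CompAlg

open Matrix in
/-- For u ∈ O, the map n₂₁(u) : X ↦ L X L̄ᵗ (L unipotent lower triangular with u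
in position (2,1)) is well defined independent of the order of multiplication,
maps the exceptional Jordan algebra J to itself, and preserves the cubic
determinant. (char k ≠ 2, 3) -/
theorem jordan_n21 {k O : Type*} [Field k] [NonAssocRing O] [Module k O]
    (C : CompAlg k O) (h2 : (2 : k) ≠ 0) (h3 : (3 : k) ≠ 0)
    (u : O) (s₁ s₂ s₃ : k) (x₁ x₂ x₃ : O) :
    (!![(1 : O), 0, 0; u, 1, 0; 0, 0, 1] * C.toMat s₁ s₂ s₃ x₁ x₂ x₃) *
        !![(1 : O), C.conj u, 0; 0, 1, 0; 0, 0, 1] =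
      !![(1 : O), 0, 0; u, 1, 0; 0, 0, 1] * (C.toMat s₁ s₂ s₃ x₁ x₂ x₃ *
        !![(1 : O), C.conj u, 0; 0, 1, 0; 0, 0, 1]) ∧
    ∃ s₁' s₂' s₃' : k, ∃ x₁' x₂' x₃' : O,
      (!![(1 : O), 0, 0; u, 1, 0; 0, 0, 1] * C.toMat s₁ s₂ s₃ x₁ x₂ x₃) *
          !![(1 : O), C.conj u, 0; 0, 1, 0; 0, 0, 1] =
        C.toMat s₁' s₂' s₃' x₁' x₂' x₃' ∧
      C.jdet s₁' s₂' s₃' x₁' x₂' x₃' = C.jdet s₁ s₂ s₃ x₁ x₂ x₃ := by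
  by_cases hO : ∀ x : O, x = 0
  · constructor
    · ext i j; exact (hO _).trans (hO _).symm
    · exact ⟨s₁, s₂, s₃, x₁, x₂, x₃, by ext i j; exact (hO _).trans (hO _).symm, rfl⟩
  · push_neg at hO
    have h1 : C.N 1 = 1 := C.N_one_eq h2 hO
    constructor
    · ext i j
      fin_cases i <;> fin_cases j <;>
        simp [CompAlg.toMat, Matrix.mul_apply, Fin.sum_univ_three, mul_add, add_mul,
          C.smul_mul, C.mul_smul', Matrix.vecHead, Matrix.vecTail, Function.comp] <;> abel
    · refine ⟨s₁, s₂ + s₁ * C.N u + C.tr (u * x₃), s₃,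
        u * C.conj x₂ + x₁, x₂, s₁ • C.conj u + x₃, ?_, C.jdet_invariant h1 u x₁ x₂ x₃ s₁ s₂ s₃⟩
      ext i j
      fin_cases i <;> fin_cases j <;>
        simp [CompAlg.toMat, Matrix.mul_apply, Fin.sum_univ_three, mul_add, add_mul,
          C.smul_mul, C.mul_smul', Matrix.vecHead, Matrix.vecTail, Function.comp,
          C.conj_add, C.conj_smul, C.conj_conj h1, C.conj_mul h1, add_smul, smul_smul,
          C.mul_conj]
      all_goals
        rw [← C.conj_mul h1, ← C.conj_add_self (u * x₃)]
        abel
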